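/- Let p ≡ 3 mod 4 be prime, x_p(n) = 0 for n = 0 and ρ((n/p)) otherwise (ρ(−1)=1, ρ(1)=0), and y_p = (1−α)x_p + α·1 with α = e^{iΦ}, cos Φ = −(p−1)/(p+1). Then the p-point DFT ŷ_p has constant magnitude, i.e., y_p is an ideal (perfect autocorrelation) unimodular sequence. -/

import Mathlib

/-!
Write `x_p = (1 - χ - δ₀) / 2` with `χ` the quadratic character of `ZMod p`. The DFT of `χ` is
`χ(m) g` with `g` the Gauss sum, and `g² = χ(-1) p = -p` because `p ≡ 3 mod 4`, so `χ(m) g` is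
purely imaginary of modulus `√p`. Hence `|ŷ(m)|² = |1 - α|² (1 + p) / 4` for `m ≠ 0` and
`|ŷ(0)|² = |(p - 1) + (p + 1) α|² / 4`, and `cos Φ = -(p - 1) / (p + 1)` makes both equal to `p`.
-/

open Finset

/-- The `N`-point discrete Fourier transform of `x : ZMod N → ℂ`. -/
noncomputable def dft {N : ℕ} [NeZero N] (x : ZMod N → ℂ) (a : ZMod N) : ℂ :=
  ∑ b : ZMod N, x b * Complex.exp (2 * Real.pi * Complex.I * ((a.val * b.val : ℕ) : ℂ) / (N : ℂ))

section DFT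

variable {N : ℕ} [NeZero N]

lemma dft_eq_sum_stdAddChar (f : ZMod N → ℂ) (a : ZMod N) :
    dft f a = ∑ b, f b * ZMod.stdAddChar (a * b) := by
  refine sum_congr rfl fun b _ => ?_
  have h : a * b = (((a.val * b.val : ℕ) : ℤ) : ZMod N) := by
    push_cast [ZMod.natCast_val, ZMod.cast_id]
    rfl
  rw [h, ZMod.stdAddChar_coe]
  push_cast
  rfl

lemma dft_add (f g : ZMod N → ℂ) (a : ZMod N) : dft (f + g) a = dft f a + dft g a := by
  simp only [dft_eq_sum_stdAddChar, Pi.add_apply, add_mul, sum_add_distrib]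

lemma dft_sub (f g : ZMod N → ℂ) (a : ZMod N) : dft (f - g) a = dft f a - dft g a := by
  simp only [dft_eq_sum_stdAddChar, Pi.sub_apply, sub_mul, sum_sub_distrib]

lemma dft_smul (c : ℂ) (f : ZMod N → ℂ) (a : ZMod N) : dft (c • f) a = c * dft f a := by
  simp only [dft_eq_sum_stdAddChar, Pi.smul_apply, smul_eq_mul, mul_assoc, mul_sum]

lemma dft_one (a : ZMod N) : dft 1 a = if a = 0 then (N : ℂ) else 0 := by
  simp_rw [dft_eq_sum_stdAddChar, Pi.one_apply, one_mul, mul_comm a,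
    AddChar.sum_mulShift a (ZMod.isPrimitive_stdAddChar N), ZMod.card]
  split_ifs <;> simp

lemma dft_single_zero (a : ZMod N) : dft (Pi.single 0 1) a = 1 := by
  simp [dft_eq_sum_stdAddChar, Pi.single_apply]

lemma dft_of_eq_mul_add_const {x y : ZMod N → ℂ} {c d : ℂ} (hy : ∀ n, y n = c * x n + d)
    (a : ZMod N) : dft y a = c * dft x a + d * if a = 0 then (N : ℂ) else 0 := by
  rw [show y = c • x + d • 1 from funext fun n => by simp [hy], dft_add, dft_smul, dft_smul,
    dft_one]

end DFT

section Legendre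

variable {p : ℕ} [Fact p.Prime]

lemma dft_mulChar {χ : MulChar (ZMod p) ℂ} (hχ : χ ≠ 1) (a : ZMod p) :
    dft χ a = χ⁻¹ a * gaussSum χ ZMod.stdAddChar := by
  rcases eq_or_ne a 0 with rfl | ha
  · simp [dft_eq_sum_stdAddChar, MulChar.sum_eq_zero_of_ne_one hχ, MulChar.map_zero]
  · have h := gaussSum_mulShift χ ZMod.stdAddChar (Units.mk0 a ha)
    simp only [Units.val_mk0, gaussSum, AddChar.mulShift_apply] at h
    rw [gaussSum, ← h, ← mul_assoc, MulChar.inv_apply', ← map_mul, inv_mul_cancel₀ ha, map_one,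
      one_mul, dft_eq_sum_stdAddChar]

variable (p) in
noncomputable def legendreChar : MulChar (ZMod p) ℂ :=
  (quadraticChar (ZMod p)).ringHomComp (Int.castRingHom ℂ)

lemma legendreChar_apply (n : ZMod p) : legendreChar p n = (legendreSym p n.val : ℂ) := by
  simp [legendreChar, legendreSym]

lemma legendreChar_isQuadratic : (legendreChar p).IsQuadratic :=
  (quadraticChar_isQuadratic (ZMod p)).comp _

lemma legendreChar_sq {m : ZMod p} (hm : m ≠ 0) : legendreChar p m ^ 2 = 1 := by
  rw [← MulChar.pow_apply' _ two_ne_zero, legendreChar_isQuadratic.sq_eq_one,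
    MulChar.one_apply hm.isUnit]

lemma legendreChar_ne_one (hp : p ≠ 2) : legendreChar p ≠ 1 :=
  (MulChar.ringHomComp_ne_one_iff Int.cast_injective).mpr
    (quadraticChar_ne_one (by rwa [ZMod.ringChar_zmod_n]))

lemma legendreChar_neg_one (hp : p % 4 = 3) : legendreChar p (-1) = -1 := by
  have hp2 : ringChar (ZMod p) ≠ 2 := by rw [ZMod.ringChar_zmod_n]; omega
  simp [legendreChar, quadraticChar_neg_one hp2, ZMod.card, ZMod.χ₄_nat_three_mod_four hp]

lemma gaussSum_legendreChar_sq (hp : p % 4 = 3) :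
    gaussSum (legendreChar p) ZMod.stdAddChar ^ 2 = -p := by
  rw [gaussSum_sq (χ := legendreChar p) (legendreChar_ne_one (by omega)) legendreChar_isQuadratic
    (ZMod.isPrimitive_stdAddChar p), legendreChar_neg_one hp, ZMod.card, neg_one_mul]

lemma legendreChar_mul_gaussSum_sq (hp : p % 4 = 3) {m : ZMod p} (hm : m ≠ 0) :
    (legendreChar p m * gaussSum (legendreChar p) ZMod.stdAddChar) ^ 2 = -(p : ℝ) := by
  rw [mul_pow, legendreChar_sq hm, gaussSum_legendreChar_sq hp, one_mul, Complex.ofReal_natCast]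

lemma dft_legendreChar (hp : p ≠ 2) (a : ZMod p) :
    dft (legendreChar p) a = legendreChar p a * gaussSum (legendreChar p) ZMod.stdAddChar := by
  rw [dft_mulChar (legendreChar_ne_one hp), legendreChar_isQuadratic.inv]

lemma dft_legendreSeq (hp : p ≠ 2) {x : ZMod p → ℂ}
    (hx : ∀ n : ZMod p, x n = if n = 0 then 0 else (1 - (legendreSym p n.val : ℂ)) / 2)
    (a : ZMod p) :
    dft x a = ((if a = 0 then (p : ℂ) else 0) - 1
      - legendreChar p a * gaussSum (legendreChar p) ZMod.stdAddChar) / 2 := by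
  have hx' : x = (1 / 2 : ℂ) • (1 - (⇑(legendreChar p) + Pi.single 0 1)) := by
    funext n
    rcases eq_or_ne n 0 with rfl | hn
    · simp [hx, MulChar.map_zero]
    · simp [hx, hn, legendreChar_apply, div_eq_inv_mul]
  rw [hx', dft_smul, dft_sub, dft_one, dft_add, dft_legendreChar hp, dft_single_zero]
  ring

end Legendre

namespace Complex

lemma exp_I_mul_arccos_re {c : ℝ} (hc₁ : -1 ≤ c) (hc₂ : c ≤ 1) :
    (exp (I * Real.arccos c)).re = c := by
  rw [mul_comm, exp_ofReal_mul_I_re, Real.cos_arccos hc₁ hc₂]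

lemma normSq_ofReal_add_ofReal_mul {α : ℂ} (hα : ‖α‖ = 1) (a b : ℝ) :
    normSq (a + b * α) = a ^ 2 + 2 * a * b * α.re + b ^ 2 := by
  have h : α.re ^ 2 + α.im ^ 2 = 1 := by
    rw [← normSq_add_mul_I, ← Complex.sq_norm, re_add_im, hα, one_pow]
  simp only [normSq_apply, add_re, add_im, mul_re, mul_im, ofReal_re, ofReal_im]
  linear_combination b ^ 2 * h

lemma normSq_one_sub_of_norm_eq_one {α : ℂ} (hα : ‖α‖ = 1) : normSq (1 - α) = 2 - 2 * α.re := by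
  have h := normSq_ofReal_add_ofReal_mul hα 1 (-1)
  push_cast at h
  rw [neg_one_mul, ← sub_eq_add_neg] at h
  linear_combination h

lemma normSq_one_add_of_sq_eq_neg {z : ℂ} {r : ℝ} (hr : 0 ≤ r) (hz : z ^ 2 = -r) :
    normSq (1 + z) = 1 + r := by
  have hre : z.re ^ 2 - z.im ^ 2 = -r := by simpa [sq] using congrArg re hz
  have him : z.re * z.im = 0 := by simpa [sq, mul_comm] using congrArg im hz
  have hz0 : z.re = 0 := by
    rcases mul_eq_zero.mp him with h | h
    · exact h
    · nlinarith
  rw [hz0] at hre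
  simp only [normSq_apply, add_re, add_im, one_re, one_im, hz0]
  linear_combination -hre

end Complex

theorem stmt14 (p : ℕ) [Fact p.Prime] (hp : p % 4 = 3)
    (x : ZMod p → ℂ)
    (hx : ∀ n : ZMod p, x n =
      if n = 0 then 0 else (1 - ((legendreSym p (n.val : ℤ) : ℤ) : ℂ)) / 2)
    (α : ℂ)
    (hα : α = Complex.exp (Complex.I *
      (Real.arccos (-(((p : ℝ) - 1) / ((p : ℝ) + 1))) : ℝ)))
    (y : ZMod p → ℂ) (hy : ∀ n, y n = (1 - α) * x n + α)
    (m₁ m₂ : ZMod p) :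
    ‖dft y m₁‖ = ‖dft y m₂‖ := by
  have hp1 : (1 : ℝ) ≤ p := by exact_mod_cast (Fact.out : p.Prime).one_le
  have hα_norm : ‖α‖ = 1 := hα ▸ Complex.norm_exp_I_mul_ofReal _
  have hα_re : α.re = -(((p : ℝ) - 1) / ((p : ℝ) + 1)) := by
    rw [hα, Complex.exp_I_mul_arccos_re]
    · rw [neg_le_neg_iff, div_le_one (by positivity)]; linarith
    · rw [neg_le, le_div_iff₀ (by positivity)]; linarith
  suffices key : ∀ m, Complex.normSq (dft y m) = p by
    rw [← sq_eq_sq₀ (norm_nonneg _) (norm_nonneg _), Complex.sq_norm, Complex.sq_norm, key, key]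
  intro m
  rw [dft_of_eq_mul_add_const hy, dft_legendreSeq (by omega) hx]
  set g := gaussSum (legendreChar p) ZMod.stdAddChar
  rcases eq_or_ne m 0 with rfl | hm
  · have h : (1 - α) * (((p : ℂ) - 1 - legendreChar p 0 * g) / 2) + α * p
        = (((p - 1) / 2 : ℝ) : ℂ) + ((p + 1) / 2 : ℝ) * α := by
      simp only [MulChar.map_zero, zero_mul, sub_zero]; push_cast; ring
    rw [if_pos rfl, h, Complex.normSq_ofReal_add_ofReal_mul hα_norm, hα_re]
    field_simp
    ring
  · have h : (1 - α) * ((0 - 1 - legendreChar p m * g) / 2) + α * 0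
        = -(1 - α) * (1 + legendreChar p m * g) / 2 := by ring
    rw [if_neg hm, h, Complex.normSq_div, Complex.normSq_mul, Complex.normSq_neg,
      Complex.normSq_one_sub_of_norm_eq_one hα_norm, hα_re, Complex.normSq_ofNat,
      Complex.normSq_one_add_of_sq_eq_neg (by positivity) (legendreChar_mul_gaussSum_sq hp hm)]
    field_simp
    ring
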